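/- Let G be a reduced bipartite graph without isolated vertices (no vertex has two degree-1 neighbors, and no pair of vertices v, w has three or more common degree-2 neighbors). If G admits a 2-layer fan-planar drawing, then every vertex of G has degree at most 13. -/
import Mathlib


variable {V : Type*}

/-- A bipartite graph with layers `X` and `Y`; each edge is a pair `(x, y)` with
`x ∈ X` and `y ∈ Y`. -/
structure BipGraph (V : Type*) where
  X : Set V
  Y : Set V
  disj : Disjoint X Y
  E : Set (V × V)
  mem_fst : ∀ e ∈ E, e.1 ∈ X
  mem_snd : ∀ e ∈ E, e.2 ∈ Y

def BipGraph.Adj (G : BipGraph V) (a b : V) : Prop := (a, b) ∈ G.E ∨ (b, a) ∈ G.E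

/-- Open neighborhood. -/
def BipGraph.nbhd (G : BipGraph V) (v : V) : Set V := {u | G.Adj v u}

noncomputable def BipGraph.deg (G : BipGraph V) (v : V) : ℕ := (G.nbhd v).ncard

/-- Two edges cross in the 2-layer drawing given by positions `px`, `py`. -/
def Cross (px py : V → ℝ) (e f : V × V) : Prop :=
  (px e.1 < px f.1 ∧ py f.2 < py e.2) ∨ (px f.1 < px e.1 ∧ py e.2 < py f.2)

/-- `(px, py)` encodes a 2-layer drawing of `G`: positions are injective on each layer. -/
def IsDrawing (G : BipGraph V) (px py : V → ℝ) : Prop :=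
  Set.InjOn px G.X ∧ Set.InjOn py G.Y

/-- A drawing is fan-planar if for each edge, all edges crossing it share a common endpoint. -/
def FanPlanar (G : BipGraph V) (px py : V → ℝ) : Prop :=
  ∀ e ∈ G.E, ∃ c : V, ∀ f ∈ G.E, Cross px py e f → f.1 = c ∨ f.2 = c

def AdmitsFanPlanar (G : BipGraph V) : Prop :=
  ∃ px py : V → ℝ, IsDrawing G px py ∧ FanPlanar G px py

/-- Three edges that pairwise share no endpoint (form a matching). -/
def PairwiseDisjoint3 (e f f' : V × V) : Prop :=
  e.1 ≠ f.1 ∧ e.1 ≠ f'.1 ∧ f.1 ≠ f'.1 ∧ e.2 ≠ f.2 ∧ e.2 ≠ f'.2 ∧ f.2 ≠ f'.2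

/-- A violating triple: `f` and `f'` both cross `e` and the three edges form a matching. -/
def ViolatingTriple (G : BipGraph V) (px py : V → ℝ) (e f f' : V × V) : Prop :=
  e ∈ G.E ∧ f ∈ G.E ∧ f' ∈ G.E ∧ Cross px py e f ∧ Cross px py e f' ∧
    PairwiseDisjoint3 e f f'

/-- Induced subgraph with a vertex deleted. -/
def BipGraph.deleteVert (G : BipGraph V) (w : V) : BipGraph V where
  X := G.X \ {w}
  Y := G.Y \ {w}
  disj := G.disj.mono Set.diff_subset Set.diff_subset
  E := {e ∈ G.E | e.1 ≠ w ∧ e.2 ≠ w}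
  mem_fst := fun e he => ⟨G.mem_fst e he.1, he.2.1⟩
  mem_snd := fun e he => ⟨G.mem_snd e he.1, he.2.2⟩

def NoIsolated (G : BipGraph V) : Prop := ∀ v ∈ G.X ∪ G.Y, (G.nbhd v).Nonempty

section Aux

lemma BipGraph.adj_symm (G : BipGraph V) {a b : V} (h : G.Adj a b) : G.Adj b a :=
  h.elim Or.inr Or.inl

lemma BipGraph.edgeX (G : BipGraph V) {x u : V} (hx : x ∈ G.X) (hu : u ∈ G.nbhd x) :
    (x, u) ∈ G.E := by
  rcases hu with h | h
  · exact h
  · exact ((Set.disjoint_left.mp G.disj hx) (G.mem_snd _ h)).elim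

lemma BipGraph.edgeY (G : BipGraph V) {y u : V} (hy : y ∈ G.Y) (hu : u ∈ G.nbhd y) :
    (u, y) ∈ G.E := by
  rcases hu with h | h
  · exact ((Set.disjoint_left.mp G.disj (G.mem_fst _ h)) hy).elim
  · exact h

/-- The flipped bipartite graph. -/
def BipGraph.flip (G : BipGraph V) : BipGraph V where
  X := G.Y
  Y := G.X
  disj := G.disj.symm
  E := {e | (e.2, e.1) ∈ G.E}
  mem_fst := fun e he => G.mem_snd _ he
  mem_snd := fun e he => G.mem_fst _ he

lemma BipGraph.flip_adj (G : BipGraph V) (a b : V) : G.flip.Adj a b ↔ G.Adj a b := by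
  simp only [BipGraph.Adj, BipGraph.flip, Set.mem_setOf_eq]
  exact or_comm

lemma BipGraph.flip_nbhd (G : BipGraph V) (v : V) : G.flip.nbhd v = G.nbhd v :=
  Set.ext fun u => G.flip_adj v u

lemma BipGraph.flip_deg (G : BipGraph V) (v : V) : G.flip.deg v = G.deg v := by
  simp [BipGraph.deg, BipGraph.flip_nbhd]

lemma BipGraph.flip_fanPlanar (G : BipGraph V) (px py : V → ℝ) (h : FanPlanar G px py) :
    FanPlanar G.flip py px := by
  intro e he
  obtain ⟨c, hc⟩ := h (e.2, e.1) he
  refine ⟨c, fun f hf hcr => ?_⟩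
  have : Cross px py (e.2, e.1) (f.2, f.1) := by
    rcases hcr with ⟨h1, h2⟩ | ⟨h1, h2⟩
    · exact Or.inr ⟨h2, h1⟩
    · exact Or.inl ⟨h2, h1⟩
  exact (hc (f.2, f.1) hf this).symm.imp id id

/-- Main degree bound for a vertex in the `X` layer. -/
lemma degX_le (G : BipGraph V)
    (hred1 : ∀ v u u' : V, u ∈ G.nbhd v → u' ∈ G.nbhd v →
      G.deg u = 1 → G.deg u' = 1 → u = u')
    (hred2 : ∀ v w : V, {u : V | G.nbhd u = {v, w}}.ncard ≤ 2)
    (px py : V → ℝ) (hdr : IsDrawing G px py) (hfp : FanPlanar G px py)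
    (v : V) (hv : v ∈ G.X) : G.deg v ≤ 13 := by
  classical
  by_contra hc
  push_neg at hc
  -- the neighborhood is finite (otherwise its ncard is 0)
  have hfin : (G.nbhd v).Finite := by
    by_contra hinf
    have hinf' : (G.nbhd v).Infinite := hinf
    rw [BipGraph.deg, hinf'.ncard] at hc
    omega
  have hSY : G.nbhd v ⊆ G.Y := fun u hu => G.mem_snd _ (G.edgeX hv hu)
  set K : Finset V := hfin.toFinset with hKdef
  have hKmem : ∀ y, y ∈ K ↔ y ∈ G.nbhd v := fun y => Set.Finite.mem_toFinset hfin
  have hKcard : 13 < K.card := by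
    rwa [BipGraph.deg, Set.ncard_eq_toFinset_card _ hfin] at hc
  have hKne : K.Nonempty := Finset.card_pos.mp (by omega)
  obtain ⟨ymin, hminK, hmin⟩ := K.exists_min_image py hKne
  obtain ⟨ymax, hmaxK, hmax⟩ := K.exists_max_image py hKne
  -- edges to the extreme neighbors
  have heymin : (v, ymin) ∈ G.E := G.edgeX hv ((hKmem _).mp hminK)
  have heymax : (v, ymax) ∈ G.E := G.edgeX hv ((hKmem _).mp hmaxK)
  obtain ⟨cL, hcL⟩ := hfp (v, ymin) heymin
  obtain ⟨cR, hcR⟩ := hfp (v, ymax) heymax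
  -- basic facts about K-members
  have hYmem : ∀ y ∈ K, y ∈ G.Y := fun y hy => hSY ((hKmem _).mp hy)
  -- strict position inequalities for interior vertices
  have hstrict : ∀ y ∈ K, y ≠ ymin → y ≠ ymax → py ymin < py y ∧ py y < py ymax := by
    intro y hy h1 h2
    constructor
    · exact lt_of_le_of_ne (hmin y hy) (fun h => h1 (hdr.2 (hYmem ymin hminK) (hYmem y hy) h).symm)
    · exact lt_of_le_of_ne (hmax y hy) (fun h => h2 (hdr.2 (hYmem y hy) (hYmem ymax hmaxK) h))
  -- key step: neighbors of interior vertices are v, cL or cR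
  have hsub : ∀ y ∈ K, y ≠ ymin → y ≠ ymax → y ≠ cL → y ≠ cR →
      ∀ u ∈ G.nbhd y, u ≠ v → (px u < px v ∧ u = cL) ∨ (px v < px u ∧ u = cR) := by
    intro y hy h1 h2 h3 h4 u hu huv
    have hyY : y ∈ G.Y := hYmem y hy
    have hedge : (u, y) ∈ G.E := G.edgeY hyY hu
    have huX : u ∈ G.X := G.mem_fst _ hedge
    have hne : px u ≠ px v := fun h => huv (hdr.1 huX hv h)
    obtain ⟨hl, hr⟩ := hstrict y hy h1 h2
    rcases hne.lt_or_gt with h | h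
    · left
      refine ⟨h, ?_⟩
      have hcr : Cross px py (v, ymin) (u, y) := Or.inr ⟨h, hl⟩
      rcases hcL (u, y) hedge hcr with h' | h'
      · exact h'
      · exact (h3 h').elim
    · right
      refine ⟨h, ?_⟩
      have hcr : Cross px py (v, ymax) (u, y) := Or.inl ⟨h, hr⟩
      rcases hcR (u, y) hedge hcr with h' | h'
      · exact h'
      · exact (h4 h').elim
  -- buckets
  set I : Finset V := (K.erase ymin).erase ymax with hIdef
  set A : Finset V := I.filter (fun y => G.nbhd y = {v}) with hadef
  set BL : Finset V := I.filter (fun y => G.nbhd y = {v, cL}) with hbldef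
  set BR : Finset V := I.filter (fun y => G.nbhd y = {v, cR}) with hbrdef
  set BB : Finset V := I.filter
      (fun y => cL ∈ G.nbhd y ∧ cR ∈ G.nbhd y ∧ cL ≠ cR ∧ cL ≠ v ∧ cR ≠ v) with hbbdef
  have hImem : ∀ y ∈ I, y ∈ K ∧ y ≠ ymin ∧ y ≠ ymax := by
    intro y hy
    rw [hIdef] at hy
    exact ⟨Finset.mem_of_mem_erase (Finset.mem_of_mem_erase hy),
      Finset.ne_of_mem_erase (Finset.mem_of_mem_erase hy), Finset.ne_of_mem_erase hy⟩
  -- classification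
  have hclass : ∀ y ∈ I, y = cL ∨ y = cR ∨ y ∈ A ∨ y ∈ BL ∨ y ∈ BR ∨ y ∈ BB := by
    intro y hy
    obtain ⟨hyK, h1, h2⟩ := hImem y hy
    by_cases h3 : y = cL
    · exact Or.inl h3
    by_cases h4 : y = cR
    · exact Or.inr (Or.inl h4)
    have hvy : v ∈ G.nbhd y := G.adj_symm ((hKmem y).mp hyK)
    have hsub' := hsub y hyK h1 h2 h3 h4
    by_cases hL : cL ∈ G.nbhd y ∧ cL ≠ v
    · by_cases hR : cR ∈ G.nbhd y ∧ cR ≠ v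
      · by_cases hLR : cL = cR
        · -- N(y) = {v, cL}
          refine Or.inr (Or.inr (Or.inr (Or.inl ?_)))
          rw [hbldef, Finset.mem_filter]
          refine ⟨hy, ?_⟩
          ext u
          simp only [Set.mem_insert_iff, Set.mem_singleton_iff]
          constructor
          · intro hu
            by_cases huv : u = v
            · exact Or.inl huv
            · rcases hsub' u hu huv with ⟨_, h⟩ | ⟨_, h⟩
              · exact Or.inr h
              · exact Or.inr (h.trans hLR.symm)
          · rintro (rfl | rfl)
            · exact hvy
            · exact hL.1
        · refine Or.inr (Or.inr (Or.inr (Or.inr (Or.inr ?_))))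
          rw [hbbdef, Finset.mem_filter]
          exact ⟨hy, hL.1, hR.1, hLR, hL.2, hR.2⟩
      · -- N(y) = {v, cL}
        refine Or.inr (Or.inr (Or.inr (Or.inl ?_)))
        rw [hbldef, Finset.mem_filter]
        refine ⟨hy, ?_⟩
        ext u
        simp only [Set.mem_insert_iff, Set.mem_singleton_iff]
        constructor
        · intro hu
          by_cases huv : u = v
          · exact Or.inl huv
          · rcases hsub' u hu huv with ⟨_, h⟩ | ⟨_, h⟩
            · exact Or.inr h
            · exact absurd ⟨h ▸ hu, h ▸ huv⟩ hR
        · rintro (rfl | rfl)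
          · exact hvy
          · exact hL.1
    · by_cases hR : cR ∈ G.nbhd y ∧ cR ≠ v
      · -- N(y) = {v, cR}
        refine Or.inr (Or.inr (Or.inr (Or.inr (Or.inl ?_))))
        rw [hbrdef, Finset.mem_filter]
        refine ⟨hy, ?_⟩
        ext u
        simp only [Set.mem_insert_iff, Set.mem_singleton_iff]
        constructor
        · intro hu
          by_cases huv : u = v
          · exact Or.inl huv
          · rcases hsub' u hu huv with ⟨_, h⟩ | ⟨_, h⟩
            · exact absurd ⟨h ▸ hu, h ▸ huv⟩ hL
            · exact Or.inr h
        · rintro (rfl | rfl)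
          · exact hvy
          · exact hR.1
      · -- N(y) = {v}
        refine Or.inr (Or.inr (Or.inl ?_))
        rw [hadef, Finset.mem_filter]
        refine ⟨hy, ?_⟩
        ext u
        simp only [Set.mem_singleton_iff]
        constructor
        · intro hu
          by_cases huv : u = v
          · exact huv
          · rcases hsub' u hu huv with ⟨_, h⟩ | ⟨_, h⟩
            · exact absurd ⟨h ▸ hu, h ▸ huv⟩ hL
            · exact absurd ⟨h ▸ hu, h ▸ huv⟩ hR
        · rintro rfl
          exact hvy
  -- bucket cardinality bounds
  have hA : A.card ≤ 1 := by
    rw [Finset.card_le_one]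
    intro a ha b hb
    rw [hadef, Finset.mem_filter] at ha hb
    have hda : G.deg a = 1 := by rw [BipGraph.deg, ha.2, Set.ncard_singleton]
    have hdb : G.deg b = 1 := by rw [BipGraph.deg, hb.2, Set.ncard_singleton]
    exact hred1 v a b ((hKmem a).mp (hImem a ha.1).1) ((hKmem b).mp (hImem b hb.1).1) hda hdb
  have hBgen : ∀ w : V, ∀ B : Finset V, (∀ y ∈ B, G.nbhd y = {v, w}) → B.card ≤ 2 := by
    intro w B hB
    have hsub1 : {u : V | G.nbhd u = {v, w}} ⊆ G.nbhd v := by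
      intro u hu
      have : v ∈ G.nbhd u := by rw [hu]; exact Set.mem_insert v _
      exact G.adj_symm this
    have hfin2 : {u : V | G.nbhd u = {v, w}}.Finite := hfin.subset hsub1
    have hsub2 : (B : Set V) ⊆ {u : V | G.nbhd u = {v, w}} := fun y hy => hB y hy
    calc B.card = (B : Set V).ncard := (Set.ncard_coe_finset B).symm
      _ ≤ {u : V | G.nbhd u = {v, w}}.ncard := Set.ncard_le_ncard hsub2 hfin2
      _ ≤ 2 := hred2 v w
  have hBL : BL.card ≤ 2 := by
    refine hBgen cL BL (fun y hy => ?_)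
    rw [hbldef, Finset.mem_filter] at hy
    exact hy.2
  have hBR : BR.card ≤ 2 := by
    refine hBgen cR BR (fun y hy => ?_)
    rw [hbrdef, Finset.mem_filter] at hy
    exact hy.2
  -- the K_{2,3}-type bound
  have hkey : ∀ a b c : V, a ∈ BB → b ∈ BB → c ∈ BB → py a < py b → py b < py c → False := by
    intro a b c ha hb hc hab hbc
    rw [hbbdef, Finset.mem_filter] at ha hb hc
    obtain ⟨haI, hLa, hRa, hLR, hLv, hRv⟩ := ha
    obtain ⟨hbI, hLb, hRb, -, -, -⟩ := hb
    obtain ⟨hcI, hLc, hRc, -, -, -⟩ := hc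
    obtain ⟨haK, ha1, ha2⟩ := hImem a haI
    obtain ⟨hbK, hb1, hb2⟩ := hImem b hbI
    obtain ⟨hcK, hc1, hc2⟩ := hImem c hcI
    have haY : a ∈ G.Y := hYmem a haK
    have hbY : b ∈ G.Y := hYmem b hbK
    have hcY : c ∈ G.Y := hYmem c hcK
    -- positions of cL, cR relative to v
    have hbcL : b ≠ cL := fun h => by
      have : (cL, cL) ∈ G.E := G.edgeY (h ▸ hbY) (h ▸ hLb)
      exact Set.disjoint_left.mp G.disj (G.mem_fst _ this) (G.mem_snd _ this)
    have hbcR : b ≠ cR := fun h => by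
      have : (cR, cR) ∈ G.E := G.edgeY (h ▸ hbY) (h ▸ hRb)
      exact Set.disjoint_left.mp G.disj (G.mem_fst _ this) (G.mem_snd _ this)
    have hpxL : px cL < px v := by
      rcases hsub b hbK hb1 hb2 hbcL hbcR cL hLb hLv with ⟨h, -⟩ | ⟨-, h⟩
      · exact h
      · exact absurd h hLR
    have hpxR : px v < px cR := by
      rcases hsub b hbK hb1 hb2 hbcL hbcR cR hRb hRv with ⟨-, h⟩ | ⟨h, -⟩
      · exact absurd h.symm hLR
      · exact h
    -- the three crossing edges
    have heb : (v, b) ∈ G.E := G.edgeX hv ((hKmem b).mp hbK)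
    have hfc : (cL, c) ∈ G.E := G.edgeY hcY hLc
    have hfa : (cR, a) ∈ G.E := G.edgeY haY hRa
    obtain ⟨w, hw⟩ := hfp (v, b) heb
    have hw1 : cL = w ∨ c = w := hw (cL, c) hfc (Or.inr ⟨hpxL, hbc⟩)
    have hw2 : cR = w ∨ a = w := hw (cR, a) hfa (Or.inl ⟨hpxR, hab⟩)
    have hcLX : cL ∈ G.X := G.mem_fst _ hfc
    have hcRX : cR ∈ G.X := G.mem_fst _ hfa
    rcases hw1 with rfl | rfl
    · rcases hw2 with h | h
      · exact hLR h.symm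
      · exact Set.disjoint_left.mp G.disj hcLX (h ▸ haY)
    · rcases hw2 with h | h
      · exact Set.disjoint_left.mp G.disj hcRX (by rw [h]; exact hcY)
      · subst h
        linarith
  have hBB : BB.card ≤ 2 := by
    by_contra hbig
    push_neg at hbig
    rw [Finset.two_lt_card_iff] at hbig
    obtain ⟨a, b, c, ha, hb, hc, hab, hac, hbc⟩ := hbig
    have haY : a ∈ G.Y := hYmem a (hImem a (Finset.mem_of_mem_filter a ha)).1
    have hbY : b ∈ G.Y := hYmem b (hImem b (Finset.mem_of_mem_filter b hb)).1
    have hcY : c ∈ G.Y := hYmem c (hImem c (Finset.mem_of_mem_filter c hc)).1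
    have d1 : py a ≠ py b := fun h => hab (hdr.2 haY hbY h)
    have d2 : py a ≠ py c := fun h => hac (hdr.2 haY hcY h)
    have d3 : py b ≠ py c := fun h => hbc (hdr.2 hbY hcY h)
    rcases d1.lt_or_gt with h1 | h1 <;> rcases d2.lt_or_gt with h2 | h2 <;>
      rcases d3.lt_or_gt with h3 | h3
    · exact hkey a b c ha hb hc h1 h3
    · exact hkey a c b ha hc hb h2 (by linarith)
    · exact absurd (h1.trans h3) (by linarith)
    · exact hkey c a b hc ha hb (by linarith) h1
    · exact hkey b a c hb ha hc h1 h2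
    · exact absurd (h3.trans h1) (by linarith)
    · exact hkey b c a hb hc ha h3 (by linarith)
    · exact hkey c b a hc hb ha (by linarith) (by linarith)
  -- putting it all together
  have hcover : K ⊆ {ymin, ymax, cL, cR} ∪ A ∪ BL ∪ BR ∪ BB := by
    intro y hy
    by_cases h1 : y = ymin
    · simp [h1]
    by_cases h2 : y = ymax
    · simp [h2]
    have hyI : y ∈ I := by
      rw [hIdef]
      exact Finset.mem_erase.mpr ⟨h2, Finset.mem_erase.mpr ⟨h1, hy⟩⟩
    rcases hclass y hyI with h | h | h | h | h | h
    · simp [h]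
    · simp [h]
    · simp [Finset.mem_union, h]
    · simp [Finset.mem_union, h]
    · simp [Finset.mem_union, h]
    · simp [Finset.mem_union, h]
  have : K.card ≤ ({ymin, ymax, cL, cR} : Finset V).card + A.card + BL.card + BR.card + BB.card := by
    calc K.card ≤ ({ymin, ymax, cL, cR} ∪ A ∪ BL ∪ BR ∪ BB).card := Finset.card_le_card hcover
      _ ≤ ({ymin, ymax, cL, cR} ∪ A ∪ BL ∪ BR).card + BB.card := Finset.card_union_le _ _
      _ ≤ ({ymin, ymax, cL, cR} ∪ A ∪ BL).card + BR.card + BB.card := by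
          have := Finset.card_union_le ({ymin, ymax, cL, cR} ∪ A ∪ BL) BR
          omega
      _ ≤ ({ymin, ymax, cL, cR} ∪ A).card + BL.card + BR.card + BB.card := by
          have := Finset.card_union_le ({ymin, ymax, cL, cR} ∪ A) BL
          omega
      _ ≤ ({ymin, ymax, cL, cR} : Finset V).card + A.card + BL.card + BR.card + BB.card := by
          have := Finset.card_union_le ({ymin, ymax, cL, cR} : Finset V) A
          omega
  have h4 : ({ymin, ymax, cL, cR} : Finset V).card ≤ 4 := by
    have h1 := Finset.card_insert_le ymin ({ymax, cL, cR} : Finset V)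
    have h2 := Finset.card_insert_le ymax ({cL, cR} : Finset V)
    have h3 := Finset.card_insert_le cL ({cR} : Finset V)
    have h5 : ({cR} : Finset V).card = 1 := Finset.card_singleton _
    omega
  omega

end Aux

/-- A reduced 2-layer fan-planar graph has maximum degree at most 13. -/
theorem stmt7 (G : BipGraph V) (hiso : NoIsolated G)
    (hred1 : ∀ v u u' : V, u ∈ G.nbhd v → u' ∈ G.nbhd v →
      G.deg u = 1 → G.deg u' = 1 → u = u')
    (hred2 : ∀ v w : V, {u : V | G.nbhd u = {v, w}}.ncard ≤ 2)
    (h : AdmitsFanPlanar G) :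
    ∀ v ∈ G.X ∪ G.Y, G.deg v ≤ 13 := by
  obtain ⟨px, py, hdr, hfp⟩ := h
  intro v hv
  rcases hv with hvX | hvY
  · exact degX_le G hred1 hred2 px py hdr hfp v hvX
  · have hred1' : ∀ v u u' : V, u ∈ G.flip.nbhd v → u' ∈ G.flip.nbhd v →
        G.flip.deg u = 1 → G.flip.deg u' = 1 → u = u' := by
      intro a u u' hu hu' h1 h2
      rw [BipGraph.flip_nbhd] at hu hu'
      rw [BipGraph.flip_deg] at h1 h2
      exact hred1 a u u' hu hu' h1 h2
    have hred2' : ∀ v w : V, {u : V | G.flip.nbhd u = {v, w}}.ncard ≤ 2 := by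
      intro a b
      have : {u : V | G.flip.nbhd u = {a, b}} = {u : V | G.nbhd u = {a, b}} := by
        ext u; rw [Set.mem_setOf_eq, Set.mem_setOf_eq, BipGraph.flip_nbhd]
      rw [this]
      exact hred2 a b
    have hdr' : IsDrawing G.flip py px := ⟨hdr.2, hdr.1⟩
    have := degX_le G.flip hred1' hred2' py px hdr' (G.flip_fanPlanar px py hfp) v hvY
    rwa [BipGraph.flip_deg] at this
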